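/- arXiv:2107.00761 — 5 statements merged into one kernel-verified Lean document; each statement's English description precedes it below -/
import Mathlib

section
/- The square-root spread σ_S is submodular: for any S ⊆ T ⊆ V and any w ∈ V \ T, σ_S(S ∪ {w}) − σ_S(S) ≥ σ_S(T ∪ {w}) − σ_S(T), where σ_S(S) = ∑_{u ∈ V} √(load(u, τ, S)). -/
/-- Load of node `v` at step `t` starting from `L` bikes on each node of seed set `S`. -/
def load {V : Type*} [Fintype V] [DecidableEq V]
    (p : V → V → ℝ) (L : ℝ) (S : Finset V) : ℕ → V → ℝ
  | 0, v => if v ∈ S then L else 0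
  | t + 1, v => ∑ u, p u v * load p L S t u

lemma load_nonneg {V : Type*} [Fintype V] [DecidableEq V]
    (p : V → V → ℝ) (L : ℝ) (hp : ∀ u v, 0 ≤ p u v) (hL : 0 ≤ L)
    (S : Finset V) : ∀ t v, 0 ≤ load p L S t v := by
  intro t
  induction t with
  | zero => intro v; simp [load]; split <;> simp [hL]
  | succ t ih =>
      intro v
      apply Finset.sum_nonneg
      intro u _
      exact mul_nonneg (hp u v) (ih u)

lemma load_mono {V : Type*} [Fintype V] [DecidableEq V]
    (p : V → V → ℝ) (L : ℝ) (hp : ∀ u v, 0 ≤ p u v) (hL : 0 ≤ L)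
    (S T : Finset V) (hST : S ⊆ T) : ∀ t v, load p L S t v ≤ load p L T t v := by
  intro t
  induction t with
  | zero =>
      intro v
      simp only [load]
      by_cases h : v ∈ S
      · simp [h, hST h]
      · simp [h]; split <;> simp [hL]
  | succ t ih =>
      intro v
      apply Finset.sum_le_sum
      intro u _
      exact mul_le_mul_of_nonneg_left (ih u) (hp u v)

lemma load_union {V : Type*} [Fintype V] [DecidableEq V]
    (p : V → V → ℝ) (L : ℝ) (S : Finset V) (w : V) (hw : w ∉ S) :
    ∀ t v, load p L (S ∪ {w}) t v = load p L S t v + load p L {w} t v := by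
  intro t
  induction t with
  | zero =>
      intro v
      simp only [load, Finset.mem_union, Finset.mem_singleton]
      by_cases h1 : v ∈ S
      · have : v ≠ w := fun h => hw (h ▸ h1)
        simp [h1, this]
      · by_cases h2 : v = w
        · subst h2; simp [h1]
        · simp [h1, h2]
  | succ t ih =>
      intro v
      simp only [load, ih]
      rw [← Finset.sum_add_distrib]
      congr 1
      ext u
      ring

lemma sqrt_diff_mono (a b c : ℝ) (ha : 0 ≤ a) (hab : a ≤ b) (hc : 0 ≤ c) :
    Real.sqrt (b + c) - Real.sqrt b ≤ Real.sqrt (a + c) - Real.sqrt a := by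
  have hb : 0 ≤ b := le_trans ha hab
  have sa := Real.sq_sqrt ha
  have sb := Real.sq_sqrt hb
  have sac := Real.sq_sqrt (add_nonneg ha hc)
  have sbc := Real.sq_sqrt (add_nonneg hb hc)
  have h1 : Real.sqrt a ≤ Real.sqrt b := Real.sqrt_le_sqrt hab
  have h2 : Real.sqrt (a + c) ≤ Real.sqrt (b + c) :=
    Real.sqrt_le_sqrt (by linarith)
  have h3 : Real.sqrt b ≤ Real.sqrt (b + c) :=
    Real.sqrt_le_sqrt (by linarith)
  have h4 : Real.sqrt a ≤ Real.sqrt (a + c) :=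
    Real.sqrt_le_sqrt (by linarith)
  have h0 : (0:ℝ) ≤ Real.sqrt a := Real.sqrt_nonneg a
  nlinarith [Real.sqrt_nonneg b, Real.sqrt_nonneg (a+c), Real.sqrt_nonneg (b+c)]

/-- The square-root spread `σ_S` is submodular. -/
theorem sqrt_spread_submodular {V : Type*} [Fintype V] [DecidableEq V]
    (p : V → V → ℝ) (L : ℝ) (hp : ∀ u v, 0 ≤ p u v) (hL : 0 ≤ L)
    (τ : ℕ) (σS : Finset V → ℝ)
    (hσ : ∀ S : Finset V, σS S = ∑ u, Real.sqrt (load p L S τ u))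
    (S T : Finset V) (hST : S ⊆ T) (w : V) (hw : w ∉ T) :
    σS (T ∪ {w}) - σS T ≤ σS (S ∪ {w}) - σS S := by
  have hwS : w ∉ S := fun h => hw (hST h)
  simp only [hσ, ← Finset.sum_sub_distrib]
  apply Finset.sum_le_sum
  intro u _
  rw [load_union p L S w hwS, load_union p L T w hw]
  exact sqrt_diff_mono _ _ _ (load_nonneg p L hp hL S τ u)
    (load_mono p L hp hL S T hST τ u) (load_nonneg p L hp hL {w} τ u)
end

section
/- In the graph constructed from an instance (X, C) of Exact Cover by 3-Sets (nodes V = C ∪ X; an edge (c, x) with probability 1/3 whenever x ∈ c; a self-loop with probability 1 at each x ∈ X), placing L = 3 bikes on the seed nodes corresponding to a subcollection C' ⊆ C and running one diffusion step gives: C' is an exact cover of X if and only if load(x, 1, C') = 1 for every x ∈ X. -/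
/-- Edge probabilities of the X3C reduction graph on `C ⊕ X`:
edge `(c, x)` with probability `1/3` whenever `x ∈ mem c`, and a self-loop with
probability `1` at each `x ∈ X`. -/
noncomputable def x3cProb {C X : Type*} [DecidableEq X] (mem : C → Finset X) :
    C ⊕ X → C ⊕ X → ℝ
  | Sum.inl c, Sum.inr x => if x ∈ mem c then 1 / 3 else 0
  | Sum.inr x, Sum.inr x' => if x = x' then 1 else 0
  | _, _ => 0

/-- Initial loads: `3` bikes on each seed node of `C`. -/
noncomputable def x3cLoad0 {C X : Type*} [DecidableEq C] (S : Finset C) :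
    C ⊕ X → ℝ
  | Sum.inl c => if c ∈ S then 3 else 0
  | Sum.inr _ => 0

/-- Load after one diffusion step. -/
noncomputable def x3cLoad1 {C X : Type*} [Fintype C] [Fintype X] [DecidableEq C]
    [DecidableEq X] (mem : C → Finset X) (S : Finset C) (v : C ⊕ X) : ℝ :=
  ∑ u, x3cProb mem u v * x3cLoad0 (X := X) S u

/-- `C'` is an exact cover of `X` iff after one step every `x ∈ X` has load exactly `1`. -/
theorem x3c_exact_cover_iff_load_one {C X : Type*} [Fintype C] [Fintype X]
    [DecidableEq C] [DecidableEq X] (mem : C → Finset X)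
    (hmem : ∀ c, (mem c).card = 3) (C' : Finset C) :
    (∀ x : X, (C'.filter fun c => x ∈ mem c).card = 1) ↔
      (∀ x : X, x3cLoad1 mem C' (Sum.inr x) = 1) := by
  have key : ∀ x : X, x3cLoad1 mem C' (Sum.inr x) =
      ((C'.filter fun c => x ∈ mem c).card : ℝ) := by
    intro x
    unfold x3cLoad1
    rw [Fintype.sum_sum_type]
    have h2 : ∑ y : X, x3cProb mem (Sum.inr y) (Sum.inr x) *
        x3cLoad0 (X := X) C' (Sum.inr y) = 0 := by
      apply Finset.sum_eq_zero; intro y _; simp [x3cLoad0]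
    rw [h2, add_zero]
    have h1 : ∀ c : C, x3cProb mem (Sum.inl c) (Sum.inr x) *
        x3cLoad0 (X := X) C' (Sum.inl c) =
        if c ∈ C'.filter (fun c => x ∈ mem c) then 1 else 0 := by
      intro c
      simp only [x3cProb, x3cLoad0, Finset.mem_filter]
      by_cases h : x ∈ mem c <;> by_cases h' : c ∈ C' <;> simp [h, h'] <;> norm_num
    simp only [h1]
    rw [Finset.sum_ite_mem, Finset.univ_inter, Finset.sum_const, nsmul_eq_mul, mul_one]
  constructor
  · intro h x; rw [key x, h x]; norm_num
  · intro h x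
    have := h x; rw [key x] at this
    exact_mod_cast this
end

section
/- In the Exact Cover by 3-Sets reduction graph, if a seed set S ⊆ C of size q (with L = 3 bikes per seed node) achieves square-root spread ∑_{v ∈ V} √(load(v, 1, S)) ≥ 3q, then S corresponds to an exact cover of X: every element of X receives load exactly 1 after one step. -/
/-- If a seed of size `q` achieves square-root spread at least `3q`, then every
element of `X` receives load exactly `1`, i.e. the seed is an exact cover. -/
theorem x3c_spread_ge_imp_exact_cover {C X : Type*} [Fintype C] [Fintype X]
    [DecidableEq C] [DecidableEq X] (mem : C → Finset X)
    (hmem : ∀ c, (mem c).card = 3) (q : ℕ) (hq : 0 < q)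
    (hX : Fintype.card X = 3 * q) (S : Finset C) (hS : S.card = q)
    (hspread : (3 * q : ℝ) ≤ ∑ v : C ⊕ X, Real.sqrt (x3cLoad1 mem S v)) :
    ∀ x : X, x3cLoad1 mem S (Sum.inr x) = 1 := by
  set f : X → ℝ := fun x => x3cLoad1 mem S (Sum.inr x) with hf
  -- loads on C nodes are 0
  have hinl : ∀ c : C, x3cLoad1 mem S (Sum.inl c) = 0 := by
    intro c
    unfold x3cLoad1
    apply Finset.sum_eq_zero
    intro u _
    rcases u with c' | x' <;> simp [x3cProb]
  -- nonnegativity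
  have hfnn : ∀ x : X, 0 ≤ f x := by
    intro x
    apply Finset.sum_nonneg
    intro u _
    rcases u with c' | x' <;> unfold x3cProb x3cLoad0 <;> positivity
  -- total load on X is 3q
  have htot : ∑ x : X, f x = 3 * q := by
    simp only [hf, x3cLoad1]
    rw [Finset.sum_comm]
    have : ∀ u : C ⊕ X,
        ∑ x : X, x3cProb mem u (Sum.inr x) * x3cLoad0 (X := X) S u
          = x3cLoad0 (X := X) S u := by
      intro u
      rcases u with c | x'
      · simp only [x3cProb]
        rw [← Finset.sum_mul]
        rw [Finset.sum_ite_mem, Finset.univ_inter]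
        simp [hmem c]
      · simp [x3cLoad0]
    rw [Finset.sum_congr rfl fun u _ => this u]
    rw [Fintype.sum_sum_type]
    simp [x3cLoad0, Finset.sum_ite_mem, hS]; ring
  -- spread equals sum over X
  have hsp : (3 * q : ℝ) ≤ ∑ x : X, Real.sqrt (f x) := by
    calc (3 * q : ℝ) ≤ ∑ v : C ⊕ X, Real.sqrt (x3cLoad1 mem S v) := hspread
      _ = ∑ x : X, Real.sqrt (f x) := by
          rw [Fintype.sum_sum_type]
          simp [hinl]
          rfl
  -- pointwise bound: sqrt a ≤ (a+1)/2
  have hkey : ∀ x : X, Real.sqrt (f x) ≤ (f x + 1) / 2 := by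
    intro x
    have h1 := Real.sq_sqrt (hfnn x)
    have h2 := Real.sqrt_nonneg (f x)
    nlinarith [sq_nonneg (Real.sqrt (f x) - 1)]
  -- sum of slacks is zero
  have hsum : ∑ x : X, ((f x + 1) / 2 - Real.sqrt (f x)) = 0 := by
    have hub : ∑ x : X, ((f x + 1) / 2 - Real.sqrt (f x))
        = (∑ x : X, f x + (Fintype.card X : ℝ)) / 2 - ∑ x : X, Real.sqrt (f x) := by
      rw [Finset.sum_sub_distrib]
      congr 1
      rw [← Finset.sum_div, Finset.sum_add_distrib]
      simp [Finset.card_univ]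
    have hle : 0 ≤ ∑ x : X, ((f x + 1) / 2 - Real.sqrt (f x)) :=
      Finset.sum_nonneg fun x _ => by linarith [hkey x]
    have : (∑ x : X, f x + (Fintype.card X : ℝ)) / 2 = 3 * q := by
      rw [htot, hX]; push_cast; ring
    rw [hub, this]
    linarith
  have hzero : ∀ x : X, (f x + 1) / 2 - Real.sqrt (f x) = 0 := by
    intro x
    have := (Finset.sum_eq_zero_iff_of_nonneg
      (fun x _ => by linarith [hkey x])).mp hsum x (Finset.mem_univ x)
    exact this
  intro x
  have h := hzero x
  have h1 := Real.sq_sqrt (hfnn x)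
  nlinarith [Real.sqrt_nonneg (f x), sq_nonneg (Real.sqrt (f x) - 1)]
end

section
/- The greedy algorithm for maximizing a nonnegative, monotone, submodular set function f over sets of size k — at each step adding the element with maximum marginal gain — returns a set S with f(S) ≥ (1 − (1 − 1/k)^k)·f(S*) ≥ (1 − 1/e)·f(S*), where S* is an optimal size-k set. -/
open Finset

/-- An element whose insertion maximizes `f` over all insertions into `S`. -/
noncomputable def greedyStep {U : Type*} [Fintype U] [Nonempty U] [DecidableEq U]
    (f : Finset U → ℝ) (S : Finset U) : U :=
  (Finset.exists_max_image Finset.univ (fun u => f (insert u S))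
    Finset.univ_nonempty).choose

/-- The greedy algorithm: start from `∅` and repeatedly add the element with
maximum marginal gain. -/
noncomputable def greedy {U : Type*} [Fintype U] [Nonempty U] [DecidableEq U]
    (f : Finset U → ℝ) : ℕ → Finset U
  | 0 => ∅
  | k + 1 => insert (greedyStep f (greedy f k)) (greedy f k)

lemma greedyStep_spec {U : Type*} [Fintype U] [Nonempty U] [DecidableEq U]
    (f : Finset U → ℝ) (S : Finset U) (u : U) :
    f (insert u S) ≤ f (insert (greedyStep f S) S) :=
  (Finset.exists_max_image Finset.univ (fun u => f (insert u S))
    Finset.univ_nonempty).choose_spec.2 u (Finset.mem_univ u)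

lemma union_le_sum {U : Type*} [DecidableEq U] (f : Finset U → ℝ)
    (hsub : ∀ S T : Finset U, S ⊆ T → ∀ v ∉ T,
      f (insert v T) - f T ≤ f (insert v S) - f S)
    (S T : Finset U) :
    f (S ∪ T) ≤ f S + ∑ v ∈ T \ S, (f (insert v S) - f S) := by
  induction T using Finset.induction_on with
  | empty => simp
  | @insert a T ha ih =>
    by_cases has : a ∈ S
    · have h1 : S ∪ insert a T = S ∪ T := by
        rw [Finset.union_insert, Finset.insert_eq_self.2 (Finset.mem_union_left _ has)]
      rw [h1, Finset.insert_sdiff_of_mem T has]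
      exact ih
    · have h1 : S ∪ insert a T = insert a (S ∪ T) := Finset.union_insert a S T
      have h2 : insert a T \ S = insert a (T \ S) :=
        Finset.insert_sdiff_of_notMem T has
      have h3 : a ∉ T \ S := fun h => ha (Finset.mem_sdiff.1 h).1
      have h4 : a ∉ S ∪ T := by
        simp only [Finset.mem_union]; tauto
      have h5 := hsub S (S ∪ T) Finset.subset_union_left a h4
      rw [h1, h2, Finset.sum_insert h3]
      linarith

/-- Nemhauser–Wolsey–Fisher: the greedy algorithm for a nonnegative, monotone,
submodular set function yields a `(1 − (1 − 1/k)^k) ≥ (1 − 1/e)` approximation. -/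
theorem greedy_submodular_approx {U : Type*} [Fintype U] [Nonempty U] [DecidableEq U]
    (f : Finset U → ℝ)
    (hnonneg : ∀ S : Finset U, 0 ≤ f S)
    (hmono : ∀ S T : Finset U, S ⊆ T → f S ≤ f T)
    (hsub : ∀ S T : Finset U, S ⊆ T → ∀ v ∉ T,
      f (insert v T) - f T ≤ f (insert v S) - f S)
    (k : ℕ) (hk : 1 ≤ k) (Sstar : Finset U) (hcard : Sstar.card = k)
    (hopt : ∀ T : Finset U, T.card = k → f T ≤ f Sstar) :
    (1 - (1 - 1 / (k : ℝ)) ^ k) * f Sstar ≤ f (greedy f k) ∧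
      (1 - 1 / Real.exp 1) * f Sstar ≤ f (greedy f k) := by
  have hk0 : (0:ℝ) < (k:ℝ) := by exact_mod_cast hk
  have hone : (0:ℝ) ≤ 1 - 1 / (k:ℝ) := by
    have : 1 / (k:ℝ) ≤ 1 := by
      rw [div_le_one hk0]; exact_mod_cast hk
    linarith
  -- one-step gap contraction
  have step : ∀ i : ℕ, f Sstar - f (greedy f (i+1)) ≤
      (1 - 1 / (k:ℝ)) * (f Sstar - f (greedy f i)) := by
    intro i
    set S := greedy f i with hS
    set g := greedyStep f S with hg
    set M := f (insert g S) - f S with hM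
    have hM0 : 0 ≤ M := by
      have := hmono S (insert g S) (Finset.subset_insert g S)
      linarith
    have hkey : f Sstar ≤ f S + (k:ℝ) * M := by
      have h1 : f Sstar ≤ f (S ∪ Sstar) :=
        hmono _ _ Finset.subset_union_right
      have h2 := union_le_sum f hsub S Sstar
      have h3 : ∑ v ∈ Sstar \ S, (f (insert v S) - f S) ≤ (Sstar \ S).card • M :=
        Finset.sum_le_card_nsmul _ _ M (fun v _ => by
          have := greedyStep_spec f S v
          simp only [hM]; linarith)
      have h4 : ((Sstar \ S).card : ℝ) * M ≤ (k:ℝ) * M := by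
        apply mul_le_mul_of_nonneg_right _ hM0
        have : (Sstar \ S).card ≤ k := hcard ▸ Finset.card_le_card Finset.sdiff_subset
        exact_mod_cast this
      rw [nsmul_eq_mul] at h3
      linarith
    have hgnext : f (greedy f (i+1)) = f S + M := by
      simp only [greedy, ← hS, ← hg, hM]; ring
    have hMd : (f Sstar - f S) / (k:ℝ) ≤ M := by
      rw [div_le_iff₀ hk0]; linarith [mul_comm M (k:ℝ)]
    rw [hgnext]
    have : (1 - 1 / (k:ℝ)) * (f Sstar - f S)
        = (f Sstar - f S) - (f Sstar - f S) / (k:ℝ) := by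
      field_simp
    rw [this]; linarith
  -- iterate
  have iter : ∀ i : ℕ, f Sstar - f (greedy f i) ≤ (1 - 1 / (k:ℝ)) ^ i * f Sstar := by
    intro i
    induction i with
    | zero => simpa using sub_le_self (f Sstar) (hnonneg (greedy f 0))
    | succ i ih =>
      calc f Sstar - f (greedy f (i+1)) ≤ (1 - 1 / (k:ℝ)) * (f Sstar - f (greedy f i)) :=
            step i
        _ ≤ (1 - 1 / (k:ℝ)) * ((1 - 1 / (k:ℝ)) ^ i * f Sstar) :=
            mul_le_mul_of_nonneg_left ih hone
        _ = (1 - 1 / (k:ℝ)) ^ (i+1) * f Sstar := by ring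
  have part1 : (1 - (1 - 1 / (k:ℝ)) ^ k) * f Sstar ≤ f (greedy f k) := by
    have := iter k; linarith [this, (by ring : (1 - (1 - 1 / (k:ℝ)) ^ k) * f Sstar
      = f Sstar - (1 - 1 / (k:ℝ)) ^ k * f Sstar)]
  refine ⟨part1, ?_⟩
  have hexp : (1 - 1 / (k:ℝ)) ^ k ≤ 1 / Real.exp 1 := by
    have h1 : 1 - 1 / (k:ℝ) ≤ Real.exp (-(1 / (k:ℝ))) := by
      have := Real.add_one_le_exp (-(1 / (k:ℝ)))
      linarith
    calc (1 - 1 / (k:ℝ)) ^ k ≤ Real.exp (-(1 / (k:ℝ))) ^ k :=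
          pow_le_pow_left₀ hone h1 k
      _ = Real.exp ((k:ℝ) * (-(1 / (k:ℝ)))) := (Real.exp_nat_mul _ k).symm
      _ = Real.exp (-1) := by congr 1; field_simp
      _ = 1 / Real.exp 1 := by rw [Real.exp_neg]; exact (one_div _).symm
  calc (1 - 1 / Real.exp 1) * f Sstar ≤ (1 - (1 - 1 / (k:ℝ)) ^ k) * f Sstar := by
        apply mul_le_mul_of_nonneg_right _ (hnonneg Sstar); linarith
    _ ≤ f (greedy f k) := part1
end

section
/- For a monotone submodular function f : Finset U → ℝ and any sets S, T ⊆ U, f(T) ≤ f(S) + ∑_{v ∈ T \ S} (f(S ∪ {v}) − f(S)). -/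
open Finset

/-- Key lemma for greedy submodular maximization: for monotone submodular `f`,
`f(T) ≤ f(S) + ∑_{v ∈ T \ S} (f(S ∪ {v}) − f(S))`. -/
theorem submodular_key_lemma {U : Type*} [Fintype U] [DecidableEq U]
    (f : Finset U → ℝ)
    (hmono : ∀ S T : Finset U, S ⊆ T → f S ≤ f T)
    (hsub : ∀ S T : Finset U, S ⊆ T → ∀ v ∉ T,
      f (insert v T) - f T ≤ f (insert v S) - f S)
    (S T : Finset U) :
    f T ≤ f S + ∑ v ∈ T \ S, (f (insert v S) - f S) := by
  have key : ∀ D : Finset U, Disjoint D S →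
      f (S ∪ D) ≤ f S + ∑ v ∈ D, (f (insert v S) - f S) := by
    intro D
    induction D using Finset.induction_on with
    | empty => simp
    | @insert a D' ha ih =>
      intro hdisj
      have hdisj' : Disjoint D' S := (Finset.disjoint_insert_left.mp hdisj).2
      have haS : a ∉ S := (Finset.disjoint_insert_left.mp hdisj).1
      have haSD : a ∉ S ∪ D' := by simp [haS, ha]
      have h1 : f (insert a (S ∪ D')) - f (S ∪ D') ≤ f (insert a S) - f S :=
        hsub S (S ∪ D') (Finset.subset_union_left) a haSD
      have h2 := ih hdisj'
      have : S ∪ insert a D' = insert a (S ∪ D') := by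
        ext x; simp [or_comm, or_left_comm]
      rw [this, Finset.sum_insert ha]
      linarith
  have h1 : T ⊆ S ∪ (T \ S) := by
    intro x hx
    by_cases h : x ∈ S <;> simp [h, hx]
  have h2 : Disjoint (T \ S) S := Finset.sdiff_disjoint
  calc f T ≤ f (S ∪ (T \ S)) := hmono _ _ h1
    _ ≤ _ := key _ h2
end
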